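/- arXiv:0902.0193 — 2 statements merged into one kernel-verified Lean document; each statement's English description precedes it below -/
import Mathlib

section
/- Let ζ_1, ..., ζ_n be pairwise distinct complex numbers, all avoiding the set A = {a_0, ..., a_p} of pairwise distinct points, and suppose that for each k = 1, ..., n, 2·∑_{j≠k} 1/(ζ_k - ζ_j) + B(ζ_k)/A(ζ_k) = 0, where A(z) = ∏_{i=0}^p (z - a_i) and B is a polynomial of degree at most p. Then there exists a polynomial V of degree at most p - 1 such that y(z) = ∏_{k=1}^n (z - ζ_k) satisfies A(z)y''(z) + B(z)y'(z) = V(z)y(z). -/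
/-!
Write `y = ∏ (X - ζ_k)` and `W = A y'' + B y'`. At a simple root `ζ_k` of `y`, with
`y = (X - ζ_k) q`, one has `y'(ζ_k) = q(ζ_k)` and `y''(ζ_k) = 2 q'(ζ_k)`, while
`q'(ζ_k) / q(ζ_k) = ∑_{j ≠ k} 1 / (ζ_k - ζ_j)`. Hence
`W(ζ_k) = y'(ζ_k) A(ζ_k) (2 ∑_{j ≠ k} 1 / (ζ_k - ζ_j) + B(ζ_k) / A(ζ_k)) = 0`, so `y ∣ W`.
Since `deg W ≤ n + p - 1` and `y` is monic of degree `n`, the quotient has degree `≤ p - 1`.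
-/

open Polynomial Finset

namespace Polynomial

section CommRing

variable {R : Type*} [CommRing R]

theorem eval_derivative_X_sub_C_mul (z : R) (q : R[X]) :
    (derivative ((X - C z) * q)).eval z = q.eval z := by
  simp [derivative_mul]

theorem eval_derivative_derivative_X_sub_C_mul (z : R) (q : R[X]) :
    (derivative (derivative ((X - C z) * q))).eval z = 2 * (derivative q).eval z := by
  simp only [derivative_mul, derivative_sub, derivative_X, derivative_C, sub_zero, one_mul,
    zero_mul, derivative_add, eval_add, eval_mul, eval_sub, eval_X, eval_C, sub_self]
  ring

theorem natDegree_mul_derivative_le (B y : R[X]) :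
    (B * derivative y).natDegree ≤ B.natDegree + y.natDegree - 1 := by
  by_cases hy : derivative y = 0
  · simp [hy]
  have hy₀ : y.natDegree ≠ 0 := fun h => hy (derivative_of_natDegree_zero h)
  have := natDegree_derivative_le y
  have := natDegree_mul_le (p := B) (q := derivative y)
  omega

theorem natDegree_mul_derivative_derivative_add_mul_derivative_le {A B : R[X]} {p : ℕ}
    (hA : A.natDegree ≤ p + 1) (hB : B.natDegree ≤ p) (y : R[X]) :
    (A * derivative (derivative y) + B * derivative y).natDegree ≤ y.natDegree + p - 1 := by
  by_cases hy₀ : y.natDegree = 0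
  · simp [derivative_of_natDegree_zero hy₀]
  have := natDegree_mul_derivative_le A (derivative y)
  have := natDegree_mul_derivative_le B y
  have := natDegree_derivative_le y
  exact natDegree_add_le_of_degree_le (by omega) (by omega)

end CommRing

section Field

variable {K ι : Type*} [Field K]

theorem prod_X_sub_C_dvd_of_isRoot [Fintype ι] {ζ : ι → K} (hζ : Function.Injective ζ)
    {W : K[X]} (hW : ∀ k, W.IsRoot (ζ k)) : ∏ k, (X - C (ζ k)) ∣ W :=
  Finset.prod_dvd_of_coprime ((pairwise_coprime_X_sub_C hζ).set_pairwise _)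
    fun k _ => dvd_iff_isRoot.mpr (hW k)

variable [DecidableEq ι]

theorem eval_derivative_prod_X_sub_C {s : Finset ι} {f : ι → K} {z : K}
    (hz : ∀ j ∈ s, z ≠ f j) :
    (derivative (∏ j ∈ s, (X - C (f j)))).eval z
      = (∏ j ∈ s, (X - C (f j))).eval z * ∑ j ∈ s, 1 / (z - f j) := by
  simp only [derivative_prod_finset, derivative_X_sub_C, mul_one, eval_finsetSum, eval_prod,
    eval_sub, eval_X, eval_C, Finset.mul_sum]
  refine Finset.sum_congr rfl fun j hj => ?_
  rw [← Finset.mul_prod_erase s (fun l => z - f l) hj]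
  field_simp [sub_ne_zero.mpr (hz j hj)]

variable [Fintype ι]

theorem eval_derivative_derivative_prod_X_sub_C_self {ζ : ι → K} (hζ : Function.Injective ζ)
    (k : ι) :
    (derivative (derivative (∏ j, (X - C (ζ j))))).eval (ζ k)
      = 2 * (derivative (∏ j, (X - C (ζ j)))).eval (ζ k)
          * ∑ j ∈ univ.erase k, 1 / (ζ k - ζ j) := by
  have hk : ∀ j ∈ univ.erase k, ζ k ≠ ζ j := fun j hj h => (ne_of_mem_erase hj) (hζ h).symm
  rw [← mul_prod_erase univ (fun j => X - C (ζ j)) (mem_univ k),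
    eval_derivative_derivative_X_sub_C_mul, eval_derivative_X_sub_C_mul,
    eval_derivative_prod_X_sub_C hk, mul_assoc]

theorem isRoot_lame_of_stationary {ζ : ι → K} (hζ : Function.Injective ζ) {A B : K[X]} {k : ι}
    (hA : A.eval (ζ k) ≠ 0)
    (hstat : 2 * ∑ j ∈ univ.erase k, 1 / (ζ k - ζ j) + B.eval (ζ k) / A.eval (ζ k) = 0) :
    (A * derivative (derivative (∏ j, (X - C (ζ j))))
      + B * derivative (∏ j, (X - C (ζ j)))).IsRoot (ζ k) := by
  rw [IsRoot, eval_add, eval_mul, eval_mul, eval_derivative_derivative_prod_X_sub_C_self hζ]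
  field_simp at hstat
  linear_combination (derivative (∏ j, (X - C (ζ j)))).eval (ζ k) * hstat

end Field

end Polynomial

theorem stmt_4_general (p n : ℕ) (a : Fin (p + 1) → ℂ)
    (ζ : Fin n → ℂ) (hζ : Function.Injective ζ) (hζa : ∀ k m, ζ k ≠ a m)
    (A B : Polynomial ℂ) (hA : A = ∏ i, (Polynomial.X - Polynomial.C (a i)))
    (hB : B.degree ≤ p)
    (hcrit : ∀ k : Fin n,
      2 * ∑ j ∈ Finset.univ.erase k, 1 / (ζ k - ζ j)
        + B.eval (ζ k) / A.eval (ζ k) = 0) :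
    ∃ V : Polynomial ℂ, V.degree ≤ (p - 1 : ℕ) ∧
      A * Polynomial.derivative (Polynomial.derivative (∏ k, (Polynomial.X - Polynomial.C (ζ k))))
        + B * Polynomial.derivative (∏ k, (Polynomial.X - Polynomial.C (ζ k)))
      = V * ∏ k, (Polynomial.X - Polynomial.C (ζ k)) := by
  have hAζ (k : Fin n) : A.eval (ζ k) ≠ 0 := by
    simpa [hA, eval_prod, Finset.prod_ne_zero_iff, sub_eq_zero] using hζa k
  obtain ⟨V, hV⟩ := prod_X_sub_C_dvd_of_isRoot hζ fun k =>
    isRoot_lame_of_stationary hζ (hAζ k) (hcrit k)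
  refine ⟨V, ?_, by rw [hV, mul_comm]⟩
  by_cases hV₀ : V = 0
  · simp [hV₀]
  have hdeg := natDegree_mul_derivative_derivative_add_mul_derivative_le
    (A := A) (B := B) (by simp [hA]) (natDegree_le_of_degree_le hB) (∏ k, (X - C (ζ k)))
  rw [hV, (monic_prod_X_sub_C _ _).natDegree_mul' hV₀] at hdeg
  exact natDegree_le_iff_degree_le.mp (by omega)

theorem stmt_4 (p n : ℕ) (a : Fin (p + 1) → ℂ) (ha : Function.Injective a)
    (ζ : Fin n → ℂ) (hζ : Function.Injective ζ) (hζa : ∀ k m, ζ k ≠ a m)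
    (A B : Polynomial ℂ) (hA : A = ∏ i, (Polynomial.X - Polynomial.C (a i)))
    (hB : B.degree ≤ p)
    (hcrit : ∀ k : Fin n,
      2 * ∑ j ∈ Finset.univ.erase k, 1 / (ζ k - ζ j)
        + B.eval (ζ k) / A.eval (ζ k) = 0) :
    ∃ V : Polynomial ℂ, V.degree ≤ (p - 1 : ℕ) ∧
      A * Polynomial.derivative (Polynomial.derivative (∏ k, (Polynomial.X - Polynomial.C (ζ k))))
        + B * Polynomial.derivative (∏ k, (Polynomial.X - Polynomial.C (ζ k)))
      = V * ∏ k, (Polynomial.X - Polynomial.C (ζ k)) :=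
  stmt_4_general p n a ζ hζ hζa A B hA hB hcrit
end

section
/- Let h be a smooth complex-valued function on ℂ and μ a compactly supported finite positive Borel measure with finite logarithmic energy. Define μ^t as the pushforward of μ under z ↦ z + t·h(z) for small real t. Then the logarithmic energy satisfies E(μ^t) − E(μ) = −Re ∬ log(1 + t(h(x)−h(y))/(x−y)) dμ(x)dμ(y), and consequently d/dt E(μ^t)|_{t=0} = −Re ∬ (h(x)−h(y))/(x−y) dμ(x)dμ(y). -/
open MeasureTheory

/-- The logarithmic energy `E(ν) = ∬ log(1/|x−y|) dν(x) dν(y)`. -/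
noncomputable def logEnergy (ν : Measure ℂ) : ℝ :=
  ∫ q : ℂ × ℂ, Real.log (1 / ‖q.1 - q.2‖) ∂(ν.prod ν)

lemma aux_log_split (h : ℂ → ℂ) (x y : ℂ) (t : ℝ)
    (hlt : ‖(t : ℂ) * (h x - h y) / (x - y)‖ < 1) :
    Real.log (1 / ‖(x + (t : ℂ) * h x) - (y + (t : ℂ) * h y)‖)
      = Real.log (1 / ‖x - y‖)
        - Real.log (‖1 + (t : ℂ) * (h x - h y) / (x - y)‖) := by
  rcases eq_or_ne x y with rfl | hxy
  · simp
  · have hxy' : x - y ≠ 0 := sub_ne_zero.mpr hxy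
    have hne : (1 : ℂ) + (t : ℂ) * (h x - h y) / (x - y) ≠ 0 := by
      intro h0
      have : (t : ℂ) * (h x - h y) / (x - y) = -1 := by linear_combination h0
      rw [this] at hlt
      simp at hlt
    have key : (x + (t : ℂ) * h x) - (y + (t : ℂ) * h y)
        = (x - y) * (1 + (t : ℂ) * (h x - h y) / (x - y)) := by
      field_simp
      ring
    have ha : ‖x - y‖ ≠ 0 := norm_ne_zero_iff.mpr hxy'
    have hb : ‖1 + (t : ℂ) * (h x - h y) / (x - y)‖ ≠ 0 := norm_ne_zero_iff.mpr hne
    simp only [key, norm_mul, one_div, mul_inv,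
      Real.log_mul (inv_ne_zero ha) (inv_ne_zero hb), Real.log_inv]
    ring

theorem stmt_13 (μ : Measure ℂ) [IsFiniteMeasure μ]
    (K : Set ℂ) (hK : IsCompact K) (hμK : μ Kᶜ = 0)
    (h : ℂ → ℂ) (hh : ContDiff ℝ (⊤ : ℕ∞) h)
    (hE : Integrable (fun q : ℂ × ℂ => Real.log (‖q.1 - q.2‖)) (μ.prod μ)) :
    (∃ ε > 0, ∀ t : ℝ, |t| < ε →
      logEnergy (Measure.map (fun z => z + (t : ℂ) * h z) μ) - logEnergy μ
        = - ∫ q : ℂ × ℂ,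
            Real.log (‖1 + (t : ℂ) * (h q.1 - h q.2) / (q.1 - q.2)‖)
              ∂(μ.prod μ)) ∧
    HasDerivAt (fun t : ℝ => logEnergy (Measure.map (fun z => z + (t : ℂ) * h z) μ))
      (-(∫ q : ℂ × ℂ, (h q.1 - h q.2) / (q.1 - q.2) ∂(μ.prod μ)).re) 0 := by
  -- notation
  set D : ℂ × ℂ → ℂ := fun q => (h q.1 - h q.2) / (q.1 - q.2) with hD
  -- measurability of D
  have hDmeas : Measurable D := by
    apply Measurable.div
    · exact ((hh.continuous.comp continuous_fst).sub (hh.continuous.comp continuous_snd)).measurable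
    · exact (continuous_fst.sub continuous_snd).measurable
  -- a.e. membership in K × K
  have hae : ∀ᵐ q : ℂ × ℂ ∂(μ.prod μ), q.1 ∈ K ∧ q.2 ∈ K := by
    have h1 : μ.prod μ (Kᶜ ×ˢ Set.univ) = 0 := by rw [Measure.prod_prod]; simp [hμK]
    have h2 : μ.prod μ (Set.univ ×ˢ Kᶜ) = 0 := by rw [Measure.prod_prod]; simp [hμK]
    have h3 : μ.prod μ ((Kᶜ ×ˢ Set.univ) ∪ (Set.univ ×ˢ Kᶜ)) = 0 := measure_union_null h1 h2
    rw [MeasureTheory.ae_iff]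
    refine measure_mono_null ?_ h3
    intro q hq
    simp only [Set.mem_setOf_eq, not_and_or] at hq
    rcases hq with hq | hq
    · exact Or.inl ⟨hq, Set.mem_univ _⟩
    · exact Or.inr ⟨Set.mem_univ _, hq⟩
  -- Lipschitz bound on K
  obtain ⟨R, hR⟩ := hK.isBounded.subset_closedBall 0
  obtain ⟨L, hL0, hLb⟩ : ∃ L : ℝ, 0 ≤ L ∧ ∀ x ∈ Metric.closedBall (0 : ℂ) R,
      ‖fderiv ℝ h x‖ ≤ L := by
    obtain ⟨L, hL⟩ := (isCompact_closedBall (0 : ℂ) R).exists_bound_of_continuousOn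
      (hh.continuous_fderiv (by simp)).continuousOn
    exact ⟨max L 0, le_max_right _ _, fun x hx => (hL x hx).trans (le_max_left _ _)⟩
  have hlip : ∀ x ∈ K, ∀ y ∈ K, ‖h x - h y‖ ≤ L * ‖x - y‖ := by
    intro x hx y hy
    exact Convex.norm_image_sub_le_of_norm_fderiv_le
      (fun z _ => (hh.differentiable (by simp)) z) hLb (convex_closedBall _ _) (hR hy) (hR hx)
  -- bound on D
  have hDbound : ∀ q : ℂ × ℂ, q.1 ∈ K → q.2 ∈ K → ‖D q‖ ≤ L := by
    intro q h1 h2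
    rcases eq_or_ne q.1 q.2 with he | he
    · simpa [hD, he] using hL0
    · have hne : q.1 - q.2 ≠ 0 := sub_ne_zero.mpr he
      have hpos : 0 < ‖q.1 - q.2‖ := norm_pos_iff.mpr hne
      rw [hD, norm_div, div_le_iff₀ hpos]
      simpa using hlip q.1 h1 q.2 h2
  set ε : ℝ := 1 / (2 * (L + 1)) with hε
  have hεpos : 0 < ε := by positivity
  -- bound on t * D for |t| < ε
  have htD : ∀ t : ℝ, |t| < ε → ∀ q : ℂ × ℂ, q.1 ∈ K → q.2 ∈ K →
      ‖(t : ℂ) * D q‖ ≤ 1 / 2 := by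
    intro t ht q h1 h2
    have : ‖(t : ℂ) * D q‖ = |t| * ‖D q‖ := by
      rw [norm_mul, Complex.norm_real, Real.norm_eq_abs]
    rw [this]
    have h1' : |t| * ‖D q‖ ≤ ε * L := by
      apply mul_le_mul ht.le (hDbound q h1 h2) (norm_nonneg _) hεpos.le
    refine h1'.trans ?_
    rw [hε, div_mul_eq_mul_div, one_mul, div_le_div_iff₀ (by positivity) (by norm_num)]
    nlinarith
  -- integrability of the base integrand
  have hf0int : Integrable (fun q : ℂ × ℂ => Real.log (1 / ‖q.1 - q.2‖))
      (μ.prod μ) := by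
    have : (fun q : ℂ × ℂ => Real.log (1 / ‖q.1 - q.2‖))
        = fun q : ℂ × ℂ => -Real.log (‖q.1 - q.2‖) := by
      funext q; rw [one_div, Real.log_inv]
    rw [this]; exact hE.neg
  have hf0meas : Measurable (fun q : ℂ × ℂ => Real.log (1 / ‖q.1 - q.2‖)) := by
    apply Real.measurable_log.comp
    exact (measurable_const.div (continuous_norm.measurable.comp
      (measurable_fst.sub measurable_snd)))
  -- measurability/integrability of the log-correction term
  have hgmeas : ∀ t : ℝ, Measurable
      (fun q : ℂ × ℂ => Real.log (‖1 + (t : ℂ) * D q‖)) := by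
    intro t
    exact Real.measurable_log.comp (continuous_norm.measurable.comp
      (measurable_const.add (measurable_const.mul hDmeas)))
  -- bounds on |1 + t D| and |log|1 + t D||
  have habs : ∀ (w : ℂ), ‖w‖ ≤ 1 / 2 →
      1 / 2 ≤ ‖1 + w‖ ∧ ‖1 + w‖ ≤ 2 := by
    intro w hw
    have h1 : ‖(1 : ℂ) + w‖ ≤ ‖(1 : ℂ)‖ + ‖w‖ := norm_add_le _ _
    have h2 : (1 : ℝ) ≤ ‖1 + w‖ + ‖w‖ := by
      simpa using norm_add_le (1 + w) (-w)
    simp only [norm_one] at h1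
    constructor <;> linarith
  have hlog2 : ∀ x : ℝ, 1 / 2 ≤ x → x ≤ 2 → |Real.log x| ≤ Real.log 2 := by
    intro x h1 h2
    rw [abs_le]
    constructor
    · have := Real.log_le_log (by norm_num) h1
      rw [one_div, Real.log_inv] at this
      linarith
    · exact Real.log_le_log (by linarith) h2
  have hgint : ∀ t : ℝ, |t| < ε → Integrable
      (fun q : ℂ × ℂ => Real.log (‖1 + (t : ℂ) * D q‖)) (μ.prod μ) := by
    intro t ht
    apply Integrable.mono' (integrable_const (Real.log 2)) (hgmeas t).aestronglyMeasurable
    filter_upwards [hae] with q hq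
    obtain ⟨hb1, hb2⟩ := habs _ (htD t ht q hq.1 hq.2)
    simpa [Real.norm_eq_abs] using hlog2 _ hb1 hb2
  -- change of variables computation
  have hΦ : ∀ t : ℝ, Measurable (fun z : ℂ => z + (t : ℂ) * h z) := fun t =>
    (continuous_id.add (continuous_const.mul hh.continuous)).measurable
  have key : ∀ t : ℝ, |t| < ε →
      logEnergy (Measure.map (fun z => z + (t : ℂ) * h z) μ) - logEnergy μ
        = - ∫ q : ℂ × ℂ,
            Real.log (‖1 + (t : ℂ) * (h q.1 - h q.2) / (q.1 - q.2)‖)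
              ∂(μ.prod μ) := by
    intro t ht
    have hmap : logEnergy (Measure.map (fun z => z + (t : ℂ) * h z) μ)
        = ∫ q : ℂ × ℂ, Real.log (1 / ‖(q.1 + (t : ℂ) * h q.1) - (q.2 + (t : ℂ) * h q.2)‖) ∂(μ.prod μ) := by
      rw [logEnergy, Measure.map_prod_map _ _ (hΦ t) (hΦ t),
        integral_map ((hΦ t).prodMap (hΦ t)).aemeasurable hf0meas.aestronglyMeasurable]
      rfl
    have hcong : ∫ q : ℂ × ℂ, Real.log (1 / ‖(q.1 + (t : ℂ) * h q.1) - (q.2 + (t : ℂ) * h q.2)‖) ∂(μ.prod μ)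
        = ∫ q : ℂ × ℂ, (Real.log (1 / ‖q.1 - q.2‖)
            - Real.log (‖1 + (t : ℂ) * D q‖)) ∂(μ.prod μ) := by
      apply integral_congr_ae
      filter_upwards [hae] with q hq
      have hlt : ‖(t : ℂ) * (h q.1 - h q.2) / (q.1 - q.2)‖ < 1 := by
        have := htD t ht q hq.1 hq.2
        rw [hD] at this
        rw [mul_div_assoc]
        linarith
      have := aux_log_split h q.1 q.2 t hlt
      rw [this, hD, mul_div_assoc]
    rw [hmap, hcong, integral_sub hf0int (hgint t ht)]
    have : ∀ q : ℂ × ℂ, (1 + (t : ℂ) * (h q.1 - h q.2) / (q.1 - q.2)) = 1 + (t : ℂ) * D q := by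
      intro q; rw [hD, mul_div_assoc]
    simp only [this]
    rw [logEnergy]
    ring
  refine ⟨⟨ε, hεpos, key⟩, ?_⟩
  -- derivative part
  have hDint : Integrable D (μ.prod μ) := by
    apply Integrable.mono' (integrable_const L) hDmeas.aestronglyMeasurable
    filter_upwards [hae] with q hq
    simpa using hDbound q hq.1 hq.2
  -- the parametric integral setup
  set F : ℝ → ℂ × ℂ → ℝ := fun t q => Real.log (‖1 + (t : ℂ) * D q‖) with hF
  set F' : ℝ → ℂ × ℂ → ℝ := fun t q => (((1 : ℂ) + (t : ℂ) * D q)⁻¹ * D q).re with hF'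
  have hF'meas : ∀ t : ℝ, Measurable (F' t) := by
    intro t
    apply Complex.measurable_re.comp
    exact ((measurable_const.add (measurable_const.mul hDmeas)).inv.mul hDmeas)
  have hder : ∀ᵐ q ∂(μ.prod μ), ∀ t ∈ Metric.ball (0 : ℝ) ε,
      HasDerivAt (fun s : ℝ => F s q) (F' t q) t := by
    filter_upwards [hae] with q hq
    intro t ht
    rw [Metric.mem_ball, Real.dist_eq, sub_zero] at ht
    have hb := htD t ht q hq.1 hq.2
    set w : ℂ := 1 + (t : ℂ) * D q with hw
    have hre : 1 / 2 ≤ w.re := by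
      have h1 : |((t : ℂ) * D q).re| ≤ ‖(t : ℂ) * D q‖ := Complex.abs_re_le_norm _
      have h2 : w.re = 1 + ((t : ℂ) * D q).re := by simp [hw]
      rw [h2]
      cases' abs_le.mp h1 with hl hr
      linarith
    have hslit : w ∈ Complex.slitPlane := Complex.mem_slitPlane_iff.mpr (Or.inl (by linarith))
    have hu : HasDerivAt (fun s : ℝ => (1 : ℂ) + (s : ℂ) * D q) (D q) t := by
      have h1 : HasDerivAt (fun s : ℝ => (s : ℂ)) 1 t := by
        simpa using (hasDerivAt_id t).ofReal_comp
      simpa using (h1.mul_const (D q)).const_add (1 : ℂ)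
    have hl : HasDerivAt Complex.log w⁻¹ w := Complex.hasDerivAt_log hslit
    have hcomp : HasDerivAt (fun s : ℝ => Complex.log (1 + (s : ℂ) * D q)) (w⁻¹ * D q) t := by
      have := hu.clog_real hslit
      rw [div_eq_inv_mul] at this
      exact this
    have hre' : HasDerivAt (fun s : ℝ => (Complex.log (1 + (s : ℂ) * D q)).re)
        ((w⁻¹ * D q).re) t := by
      have := Complex.reCLM.hasFDerivAt.comp_hasDerivAt t hcomp
      exact this
    have heq : (fun s : ℝ => F s q) = fun s : ℝ => (Complex.log (1 + (s : ℂ) * D q)).re := by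
      funext s
      rw [hF]
      exact (Complex.log_re _).symm
    rw [heq, hF']
    convert hre' using 2
  have hbound : ∀ᵐ q ∂(μ.prod μ), ∀ t ∈ Metric.ball (0 : ℝ) ε, ‖F' t q‖ ≤ 2 * L := by
    filter_upwards [hae] with q hq
    intro t ht
    rw [Metric.mem_ball, Real.dist_eq, sub_zero] at ht
    have hb := htD t ht q hq.1 hq.2
    obtain ⟨hb1, _⟩ := habs _ hb
    have habsD := hDbound q hq.1 hq.2
    have h1 : ‖F' t q‖ ≤ ‖((1 : ℂ) + (t : ℂ) * D q)⁻¹ * D q‖ := by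
      rw [hF']
      exact Complex.abs_re_le_norm _
    refine h1.trans ?_
    rw [norm_mul, norm_inv]
    have h2 : (‖(1 : ℂ) + (t : ℂ) * D q‖)⁻¹ ≤ 2 := by
      rw [inv_le_comm₀ (by linarith) (by norm_num)]
      linarith
    calc (‖(1 : ℂ) + (t : ℂ) * D q‖)⁻¹ * ‖D q‖
        ≤ 2 * ‖D q‖ := by
          apply mul_le_mul_of_nonneg_right h2 (norm_nonneg _)
      _ ≤ 2 * L := by linarith
  have hdom := hasDerivAt_integral_of_dominated_loc_of_deriv_le (μ := μ.prod μ)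
    (F := F) (F' := F') (x₀ := (0 : ℝ)) (bound := fun _ => 2 * L) (Metric.ball_mem_nhds 0 hεpos)
    (Filter.Eventually.of_forall fun t => ((hgmeas t).aestronglyMeasurable))
    (hgint 0 (by simpa using hεpos))
    ((hF'meas 0).aestronglyMeasurable) hbound (integrable_const _) hder
  have hG : HasDerivAt (fun t : ℝ => ∫ q, F t q ∂(μ.prod μ))
      ((∫ q : ℂ × ℂ, (h q.1 - h q.2) / (q.1 - q.2) ∂(μ.prod μ)).re) 0 := by
    have h0 : ∫ q, F' 0 q ∂(μ.prod μ)
        = (∫ q : ℂ × ℂ, (h q.1 - h q.2) / (q.1 - q.2) ∂(μ.prod μ)).re := by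
      have : F' 0 = fun q => (D q).re := by
        funext q; simp [hF']
      rw [this, ← hD]
      exact integral_re hDint
    rw [← h0]
    exact hdom.2
  have hev : (fun t : ℝ => logEnergy (Measure.map (fun z => z + (t : ℂ) * h z) μ))
      =ᶠ[nhds 0] (fun t : ℝ => logEnergy μ - ∫ q, F t q ∂(μ.prod μ)) := by
    filter_upwards [Metric.ball_mem_nhds (0 : ℝ) hεpos] with t ht
    rw [Metric.mem_ball, Real.dist_eq, sub_zero] at ht
    have hk := key t ht
    have : ∫ q : ℂ × ℂ, Real.log (‖1 + (t : ℂ) * (h q.1 - h q.2) / (q.1 - q.2)‖)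
        ∂(μ.prod μ) = ∫ q, F t q ∂(μ.prod μ) := by
      apply integral_congr_ae
      apply Filter.Eventually.of_forall
      intro q
      simp only [hF, hD, mul_div_assoc]
    rw [this] at hk
    linarith
  have := ((hasDerivAt_const (0 : ℝ) (logEnergy μ)).sub hG).congr_of_eventuallyEq hev
  simpa using this
end
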